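/- Let F : ℝ^n → ℝ be convex and differentiable with minimizer x_*. Consider deterministic GPA iterates with μ_x ∈ [0,1), μ_y ∈ [0,1): y^{(t)} = μ_y x^{(t)} + (1-μ_y) z^{(t)}, x^{(t+1)} = μ_x x^{(t)} + (1-μ_x) z^{(t+1)}, where z^{(1)}, ..., z^{(T)} are arbitrary and z^{(1)} = x^{(1)}. Then for the average iterate x̄^{(T)} = (1/T) Σ_{t=1}^T x^{(t)}: F(x̄^{(T)}) - F(x_*) ≤ (1/T) Σ_{t=1}^T ⟨∇F(y^{(t)}), z^{(t)} - x_*⟩ + (μ_x/(1-μ_x)) (1/T) (F(x^{(1)}) - F(x_*)) - (1/((1-μ_y) T)) Σ_t B_F(y^{(t)}, x^{(t)}) - (μ_y/((1-μ_y) T)) Σ_t B_F(x^{(t)}, y^{(t)}) - (μ_x/((1-μ_x) T)) Σ_t B_F(x^{(t-1)}, x^{(t)}). -/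

import Mathlib

open RealInnerProductSpace

/-- Bregman divergence of `F` with gradient map `F'`. -/
noncomputable def bregman {n : ℕ} (F : EuclideanSpace ℝ (Fin n) → ℝ)
    (F' : EuclideanSpace ℝ (Fin n) → EuclideanSpace ℝ (Fin n))
    (a b : EuclideanSpace ℝ (Fin n)) : ℝ :=
  F a - F b - ⟪F' b, a - b⟫

/-!
Write `z = x + c (x - x₀)`, with `x₀` the previous iterate and `c = μx / (1 - μx)`, and
`z - y = (μy / (1 - μy)) (y - x)`. By the definition of the Bregman divergence alone, every inner
product `⟪∇F(y), z - x⋆⟫` then expands into `F(x) - F(x⋆) + c (F(x) - F(x₀))`, plus the Bregman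
terms of the bound, plus `B_F(x⋆, y)`. Summing over `t`, the middle terms telescope to
`c (F(x_T) - F(x_1)) ≥ c (F(x⋆) - F(x_1))`, `B_F(x⋆, y) ≥ 0` by convexity, and Jensen's
inequality bounds `F` at the average iterate.
-/

theorem ConvexOn.apply_sub_le_of_hasFDerivAt {E : Type*} [NormedAddCommGroup E] [NormedSpace ℝ E]
    {s : Set E} {F : E → ℝ} {F' : E →L[ℝ] ℝ} {a b : E} (hF : ConvexOn ℝ s F)
    (ha : a ∈ s) (hb : b ∈ s) (hF' : HasFDerivAt F F' b) :
    F' (a - b) ≤ F a - F b := by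
  let ℓ : ℝ →ᵃ[ℝ] E := AffineMap.lineMap b a
  have hderiv : HasDerivAt (F ∘ ℓ) (F' (a - b)) 0 := by
    rw [← AffineMap.lineMap_apply_zero b a (k := ℝ)] at hF'
    exact hF'.comp_hasDerivAt 0 AffineMap.hasDerivAt_lineMap
  simpa [ℓ, slope_def_field] using
    (hF.comp_affineMap ℓ).le_slope_of_hasDerivAt (by simpa [ℓ] using hb) (by simpa [ℓ] using ha)
      one_pos hderiv

theorem ConvexOn.map_finset_average_le {ι E : Type*} [AddCommGroup E] [Module ℝ E] {D : Set E}
    {F : E → ℝ} (hF : ConvexOn ℝ D F) {s : Finset ι} (hs : s.Nonempty) {p : ι → E}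
    (hp : ∀ i ∈ s, p i ∈ D) :
    F ((1 / (s.card : ℝ)) • ∑ i ∈ s, p i) ≤ (1 / (s.card : ℝ)) * ∑ i ∈ s, F (p i) := by
  have hweights : ∑ _i ∈ s, 1 / (s.card : ℝ) = 1 := by
    rw [Finset.sum_const, nsmul_eq_mul]
    field_simp [hs.card_pos.ne']
  simpa only [Finset.smul_sum, Finset.mul_sum, smul_eq_mul] using
    hF.map_sum_le (fun _ _ => by positivity) hweights hp

theorem Finset.sum_Icc_one_sub_pred {M : Type*} [AddCommGroup M] (f : ℕ → M) (T : ℕ) :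
    ∑ t ∈ Finset.Icc 1 T, (f t - f (t - 1)) = f T - f 0 := by
  rw [← Finset.Ico_add_one_right_eq_Icc, Finset.sum_Ico_eq_sum_range, Nat.add_sub_cancel]
  simpa [add_comm 1] using Finset.sum_range_sub f T

theorem sub_eq_div_smul_sub_of_eq_smul_add {𝕜 M : Type*} [Field 𝕜] [AddCommGroup M]
    [Module 𝕜 M] {μ : 𝕜} {x x' z : M} (hμ : μ ≠ 1) (h : x' = μ • x + (1 - μ) • z) :
    z - x' = (μ / (1 - μ)) • (x' - x) := by
  have h1μ : 1 - μ ≠ 0 := sub_ne_zero.mpr hμ.symm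
  rw [h, div_eq_mul_inv]
  match_scalars <;> field_simp <;> ring

section Bregman

variable {n : ℕ} {F : EuclideanSpace ℝ (Fin n) → ℝ}
  {F' : EuclideanSpace ℝ (Fin n) → EuclideanSpace ℝ (Fin n)}

theorem bregman_nonneg {s : Set (EuclideanSpace ℝ (Fin n))} (hF : ConvexOn ℝ s F)
    {a b : EuclideanSpace ℝ (Fin n)} (ha : a ∈ s) (hb : b ∈ s) (hF' : HasGradientAt F (F' b) b) :
    0 ≤ bregman F F' a b := by
  have := hF.apply_sub_le_of_hasFDerivAt ha hb (hasGradientAt_iff_hasFDerivAt.mp hF')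
  rw [InnerProductSpace.toDual_apply_apply] at this
  rw [bregman]
  linarith

theorem inner_sub_eq_of_eq_smul_add {μ : ℝ} (hμ : μ ≠ 1) {x y z : EuclideanSpace ℝ (Fin n)}
    (hy : y = μ • x + (1 - μ) • z) (w : EuclideanSpace ℝ (Fin n)) :
    ⟪F' y, z - w⟫ = F x - F w + ⟪F' x, z - x⟫ + (1 - μ)⁻¹ * bregman F F' y x
      + μ / (1 - μ) * bregman F F' x y + bregman F F' w y := by
  have h1μ : 1 - μ ≠ 0 := sub_ne_zero.mpr hμ.symm
  have hyx : y - x = (1 - μ) • (z - x) := by rw [hy]; module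
  have hxy : x - y = -((1 - μ) • (z - x)) := by rw [← hyx]; abel
  have hwy : w - y = -(x - w) - (1 - μ) • (z - x) := by rw [← hyx]; abel
  have hzw : z - w = (x - w) + (z - x) := by abel
  simp only [bregman, hyx, hxy, hwy, hzw, inner_add_right, inner_sub_right, inner_neg_right,
    real_inner_smul_right]
  field_simp
  ring

theorem inner_sub_eq_of_sub_eq_smul {c : ℝ} {x x₀ z : EuclideanSpace ℝ (Fin n)}
    (hz : z - x = c • (x - x₀)) :
    ⟪F' x, z - x⟫ = c * (F x - F x₀ + bregman F F' x₀ x) := by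
  have : x₀ - x = -(x - x₀) := by abel
  rw [hz, bregman, this, real_inner_smul_right, inner_neg_right]
  ring

end Bregman

section GPA

variable {n : ℕ} {F : EuclideanSpace ℝ (Fin n) → ℝ}
  {F' : EuclideanSpace ℝ (Fin n) → EuclideanSpace ℝ (Fin n)} {μx μy : ℝ}
  {x y z : ℕ → EuclideanSpace ℝ (Fin n)}

theorem gpa_sub_eq_smul_sub_pred (hμx : μx ≠ 1)
    (hx : ∀ t ≥ 1, x (t + 1) = μx • x t + (1 - μx) • z (t + 1))
    (hinit : z 1 = x 1) (hx0 : x 0 = x 1) :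
    ∀ t ≥ 1, z t - x t = (μx / (1 - μx)) • (x t - x (t - 1))
  | 1, _ => by simp [hinit, hx0]
  | t + 2, _ => sub_eq_div_smul_sub_of_eq_smul_add hμx (hx (t + 1) (by omega))

theorem gpa_inner_eq (hμx : μx ≠ 1) (hμy : μy ≠ 1)
    (hy : ∀ t ≥ 1, y t = μy • x t + (1 - μy) • z t)
    (hx : ∀ t ≥ 1, x (t + 1) = μx • x t + (1 - μx) • z (t + 1))
    (hinit : z 1 = x 1) (hx0 : x 0 = x 1) (w : EuclideanSpace ℝ (Fin n)) {t : ℕ} (ht : 1 ≤ t) :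
    ⟪F' (y t), z t - w⟫ = F (x t) - F w + μx / (1 - μx) * (F (x t) - F (x (t - 1)))
      + (1 - μy)⁻¹ * bregman F F' (y t) (x t) + μy / (1 - μy) * bregman F F' (x t) (y t)
      + μx / (1 - μx) * bregman F F' (x (t - 1)) (x t) + bregman F F' w (y t) := by
  rw [inner_sub_eq_of_eq_smul_add hμy (hy t ht) w,
    inner_sub_eq_of_sub_eq_smul (gpa_sub_eq_smul_sub_pred hμx hx hinit hx0 t ht)]
  ring

theorem gpa_sum_le (hμx0 : 0 ≤ μx) (hμx1 : μx < 1) (hμy : μy ≠ 1)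
    (hgrad : ∀ p, HasGradientAt F (F' p) p) (hconv : ConvexOn ℝ Set.univ F)
    {xstar : EuclideanSpace ℝ (Fin n)} (hmin : ∀ p, F xstar ≤ F p)
    (hy : ∀ t ≥ 1, y t = μy • x t + (1 - μy) • z t)
    (hx : ∀ t ≥ 1, x (t + 1) = μx • x t + (1 - μx) • z (t + 1))
    (hinit : z 1 = x 1) (hx0 : x 0 = x 1) (T : ℕ) :
    ∑ t ∈ Finset.Icc 1 T, (F (x t) - F xstar) ≤
      ∑ t ∈ Finset.Icc 1 T, ⟪F' (y t), z t - xstar⟫ + μx / (1 - μx) * (F (x 1) - F xstar)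
      - (1 - μy)⁻¹ * ∑ t ∈ Finset.Icc 1 T, bregman F F' (y t) (x t)
      - μy / (1 - μy) * ∑ t ∈ Finset.Icc 1 T, bregman F F' (x t) (y t)
      - μx / (1 - μx) * ∑ t ∈ Finset.Icc 1 T, bregman F F' (x (t - 1)) (x t) := by
  have hsum : ∑ t ∈ Finset.Icc 1 T, ⟪F' (y t), z t - xstar⟫ =
      ∑ t ∈ Finset.Icc 1 T, (F (x t) - F xstar) + μx / (1 - μx) * (F (x T) - F (x 0))
      + (1 - μy)⁻¹ * ∑ t ∈ Finset.Icc 1 T, bregman F F' (y t) (x t)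
      + μy / (1 - μy) * ∑ t ∈ Finset.Icc 1 T, bregman F F' (x t) (y t)
      + μx / (1 - μx) * ∑ t ∈ Finset.Icc 1 T, bregman F F' (x (t - 1)) (x t)
      + ∑ t ∈ Finset.Icc 1 T, bregman F F' xstar (y t) := by
    rw [Finset.sum_congr rfl fun t ht =>
        gpa_inner_eq (F := F) (F' := F') hμx1.ne hμy hy hx hinit hx0 xstar (Finset.mem_Icc.mp ht).1,
      ← Finset.sum_Icc_one_sub_pred (fun t => F (x t))]
    simp only [Finset.sum_add_distrib, Finset.mul_sum]
  have hdist : 0 ≤ ∑ t ∈ Finset.Icc 1 T, bregman F F' xstar (y t) :=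
    Finset.sum_nonneg fun t _ => bregman_nonneg hconv (Set.mem_univ xstar) (Set.mem_univ (y t)) (hgrad (y t))
  have hlast : μx / (1 - μx) * F xstar ≤ μx / (1 - μx) * F (x T) :=
    mul_le_mul_of_nonneg_left (hmin (x T)) (div_nonneg hμx0 (sub_nonneg.mpr hμx1.le))
  rw [hx0] at hsum
  linarith

end GPA

theorem gpa_convergence_bound_general
    (n : ℕ) (μx μy : ℝ) (hμx0 : 0 ≤ μx) (hμx1 : μx < 1) (hμy1 : μy < 1)
    (F : EuclideanSpace ℝ (Fin n) → ℝ)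
    (F' : EuclideanSpace ℝ (Fin n) → EuclideanSpace ℝ (Fin n))
    (hgrad : ∀ p, HasGradientAt F (F' p) p)
    (hconv : ConvexOn ℝ Set.univ F)
    (xstar : EuclideanSpace ℝ (Fin n)) (hmin : ∀ p, F xstar ≤ F p)
    (x y z : ℕ → EuclideanSpace ℝ (Fin n))
    (hy : ∀ t ≥ 1, y t = μy • x t + (1 - μy) • z t)
    (hx : ∀ t ≥ 1, x (t + 1) = μx • x t + (1 - μx) • z (t + 1))
    (hinit : z 1 = x 1) (hconv0 : x 0 = x 1)
    (T : ℕ) (hT : 1 ≤ T) :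
    F ((1 / (T : ℝ)) • ∑ t ∈ Finset.Icc 1 T, x t) - F xstar ≤
      (1 / (T : ℝ)) * ∑ t ∈ Finset.Icc 1 T, ⟪F' (y t), z t - xstar⟫
      + (μx / (1 - μx)) * (1 / (T : ℝ)) * (F (x 1) - F xstar)
      - (1 / ((1 - μy) * T)) * ∑ t ∈ Finset.Icc 1 T, bregman F F' (y t) (x t)
      - (μy / ((1 - μy) * T)) * ∑ t ∈ Finset.Icc 1 T, bregman F F' (x t) (y t)
      - (μx / ((1 - μx) * T)) * ∑ t ∈ Finset.Icc 1 T, bregman F F' (x (t - 1)) (x t) := by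
  have hTpos : (0 : ℝ) < T := by exact_mod_cast hT
  have hcard : (Finset.Icc 1 T).card = T := by simp
  have hjensen := hconv.map_finset_average_le (s := Finset.Icc 1 T) (p := x)
    ⟨1, Finset.mem_Icc.mpr ⟨le_rfl, hT⟩⟩ fun t _ => Set.mem_univ (x t)
  rw [hcard] at hjensen
  calc F ((1 / (T : ℝ)) • ∑ t ∈ Finset.Icc 1 T, x t) - F xstar
      ≤ (1 / (T : ℝ)) * ∑ t ∈ Finset.Icc 1 T, F (x t) - F xstar := by linarith
    _ = (1 / (T : ℝ)) * ∑ t ∈ Finset.Icc 1 T, (F (x t) - F xstar) := by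
      rw [Finset.sum_sub_distrib, Finset.sum_const, hcard, nsmul_eq_mul]
      field_simp
    _ ≤ (1 / (T : ℝ)) * (∑ t ∈ Finset.Icc 1 T, ⟪F' (y t), z t - xstar⟫
          + μx / (1 - μx) * (F (x 1) - F xstar)
          - (1 - μy)⁻¹ * ∑ t ∈ Finset.Icc 1 T, bregman F F' (y t) (x t)
          - μy / (1 - μy) * ∑ t ∈ Finset.Icc 1 T, bregman F F' (x t) (y t)
          - μx / (1 - μx) * ∑ t ∈ Finset.Icc 1 T, bregman F F' (x (t - 1)) (x t)) := by
      gcongr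
      exact gpa_sum_le hμx0 hμx1 hμy1.ne hgrad hconv hmin hy hx hinit hconv0 T
    _ = _ := by simp only [div_eq_mul_inv, mul_inv]; ring

/-- Convergence bound for (deterministic) Generalized Primal Averaging:
the average iterate's suboptimality is bounded by the average regret of the base
optimizer plus a `1/T` term, minus nonnegative Bregman divergence terms. -/
theorem gpa_convergence_bound
    (n : ℕ) (μx μy : ℝ) (hμx0 : 0 ≤ μx) (hμx1 : μx < 1) (hμy0 : 0 ≤ μy) (hμy1 : μy < 1)
    (F : EuclideanSpace ℝ (Fin n) → ℝ)
    (F' : EuclideanSpace ℝ (Fin n) → EuclideanSpace ℝ (Fin n))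
    (hgrad : ∀ p, HasGradientAt F (F' p) p)
    (hconv : ConvexOn ℝ Set.univ F)
    (xstar : EuclideanSpace ℝ (Fin n)) (hmin : ∀ p, F xstar ≤ F p)
    (x y z : ℕ → EuclideanSpace ℝ (Fin n))
    (hy : ∀ t ≥ 1, y t = μy • x t + (1 - μy) • z t)
    (hx : ∀ t ≥ 1, x (t + 1) = μx • x t + (1 - μx) • z (t + 1))
    (hinit : z 1 = x 1) (hconv0 : x 0 = x 1)
    (T : ℕ) (hT : 1 ≤ T) :
    F ((1 / (T : ℝ)) • ∑ t ∈ Finset.Icc 1 T, x t) - F xstar ≤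
      (1 / (T : ℝ)) * ∑ t ∈ Finset.Icc 1 T, ⟪F' (y t), z t - xstar⟫
      + (μx / (1 - μx)) * (1 / (T : ℝ)) * (F (x 1) - F xstar)
      - (1 / ((1 - μy) * T)) * ∑ t ∈ Finset.Icc 1 T, bregman F F' (y t) (x t)
      - (μy / ((1 - μy) * T)) * ∑ t ∈ Finset.Icc 1 T, bregman F F' (x t) (y t)
      - (μx / ((1 - μx) * T)) * ∑ t ∈ Finset.Icc 1 T, bregman F F' (x (t - 1)) (x t) :=
  gpa_convergence_bound_general n μx μy hμx0 hμx1 hμy1 F F' hgrad hconv xstar hmin x y z hy hx hinit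
    hconv0 T hT
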